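/- arXiv:1807.07554 — 6 statements merged into one kernel-verified Lean document; each statement's English description precedes it below -/
import Mathlib

section
/- Let V : ℝⁿ → ℝ be continuous and bounded below, x ∈ ℝⁿ, d a unit vector, and τ > 0. Then either there exists β ≠ 0 such that (V(x - τβd) - V(x))/(τβ) = -β, or V is Clarke directionally stationary at x along d, i.e. min{V°(x; d), V°(x; -d)} ≥ 0. -/
/-!
The Itoh–Abe equation for `β ≠ 0` is equivalent to `g β = 0`, where
`g β = V(x - τβd) - V x + τβ²`. Since `V` is bounded below, `g` is coercive, so by the
intermediate value theorem it suffices to find some `β₀ ≠ 0` with `g β₀ < 0`. If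
`V°(x; e) < 0` for `e = ±d`, then `V(x + l e) - V x ≤ r l` for some `r < 0` and all small
`l > 0`; taking `l = τβ` with `0 < β < -r` makes the quadratic term `τβ²` too small to
compensate, so `g(∓β) < 0`.
-/

open scoped InnerProductSpace
open Metric Filter MeasureTheory

/-- The Clarke (generalised) directional derivative
`V°(x; d) = limsup_{y → x, λ ↓ 0} (V(y + λ d) - V(y))/λ`,
expressed as the infimum of eventual upper bounds. -/
noncomputable def clarkeDir {n : ℕ} (V : EuclideanSpace ℝ (Fin n) → ℝ)
    (x d : EuclideanSpace ℝ (Fin n)) : ℝ :=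
  sInf {r : ℝ | ∃ δ > 0, ∀ y ∈ ball x δ, ∀ l : ℝ, 0 < l → l < δ →
    (V (y + l • d) - V y) / l ≤ r}

/-- The Clarke subdifferential `∂V(x) = {p : V°(x; v) ≥ ⟨v, p⟩ for all v}`. -/
noncomputable def clarkeSubdiff {n : ℕ} (V : EuclideanSpace ℝ (Fin n) → ℝ)
    (x : EuclideanSpace ℝ (Fin n)) : Set (EuclideanSpace ℝ (Fin n)) :=
  {p | ∀ v, ⟪v, p⟫_ℝ ≤ clarkeDir V x v}

open Topology Set

lemma exists_ne_zero_eq_zero_of_neg {g : ℝ → ℝ} (hg : Continuous g)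
    (hcoer : Tendsto g (cocompact ℝ) atTop) {β₀ : ℝ} (hβ₀ : β₀ ≠ 0) (hneg : g β₀ < 0) :
    ∃ β, β ≠ 0 ∧ g β = 0 := by
  rcases hβ₀.lt_or_gt with hlt | hlt
  · obtain ⟨β, hβ, hgβ⟩ := intermediate_value_Iic' hg.continuousOn
      (hcoer.mono_left atBot_le_cocompact) hneg.le
    exact ⟨β, (lt_of_le_of_lt hβ hlt).ne, hgβ⟩
  · obtain ⟨β, hβ, hgβ⟩ := intermediate_value_Ici hg.continuousOn
      (hcoer.mono_left atTop_le_cocompact) hneg.le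
    exact ⟨β, (hlt.trans_le hβ).ne', hgβ⟩

lemma tendsto_add_mul_sq_cocompact {φ : ℝ → ℝ} (hφ : BddBelow (range φ)) {c : ℝ}
    (hc : 0 < c) : Tendsto (fun β => φ β + c * β ^ 2) (cocompact ℝ) atTop := by
  obtain ⟨m, hm⟩ := hφ
  refine tendsto_atTop_add_left_of_le _ m (fun β => hm ⟨β, rfl⟩) (Tendsto.const_mul_atTop hc ?_)
  have hnorm := tendsto_norm_cocompact_atTop (E := ℝ)
  simpa only [Real.norm_eq_abs, ← sq, sq_abs] using hnorm.atTop_mul_atTop₀ hnorm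

section ItohAbe

variable {n : ℕ} {V : EuclideanSpace ℝ (Fin n) → ℝ} {x : EuclideanSpace ℝ (Fin n)} {τ : ℝ}

lemma exists_itohAbe_root_of_neg (hV : Continuous V) (hbdd : BddBelow (range V))
    (d : EuclideanSpace ℝ (Fin n)) (hτ : 0 < τ) {β₀ : ℝ} (hβ₀ : β₀ ≠ 0)
    (hneg : V (x - (τ * β₀) • d) - V x + τ * β₀ ^ 2 < 0) :
    ∃ β : ℝ, β ≠ 0 ∧ (V (x - (τ * β) • d) - V x) / (τ * β) = -β := by
  obtain ⟨m, hm⟩ := hbdd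
  have hφ : BddBelow (range fun β : ℝ => V (x - (τ * β) • d) - V x) :=
    ⟨m - V x, by rintro _ ⟨β, rfl⟩; linarith [hm ⟨x - (τ * β) • d, rfl⟩]⟩
  obtain ⟨β, hβ, hroot⟩ := exists_ne_zero_eq_zero_of_neg (by fun_prop)
    (tendsto_add_mul_sq_cocompact hφ hτ) hβ₀ hneg
  refine ⟨β, hβ, ?_⟩
  rw [div_eq_iff (mul_ne_zero hτ.ne' hβ)]
  linear_combination hroot

lemma eventually_sub_le_mul_of_clarkeDir_neg {e : EuclideanSpace ℝ (Fin n)}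
    (h : clarkeDir V x e < 0) : ∃ r < 0, ∀ᶠ l in 𝓝[>] 0, V (x + l • e) - V x ≤ r * l := by
  have hne : {r : ℝ | ∃ δ > 0, ∀ y ∈ ball x δ, ∀ l : ℝ, 0 < l → l < δ →
      (V (y + l • e) - V y) / l ≤ r}.Nonempty := by
    by_contra hemp
    rw [not_nonempty_iff_eq_empty] at hemp
    exact h.not_ge (by rw [clarkeDir, hemp, Real.sInf_empty])
  obtain ⟨r, ⟨δ, hδ, hbound⟩, hr⟩ := exists_lt_of_csInf_lt hne h
  refine ⟨r, hr, ?_⟩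
  filter_upwards [Ioo_mem_nhdsGT hδ] with l hl
  exact (div_le_iff₀ hl.1).1 (hbound x (mem_ball_self hδ) l hl.1 hl.2)

lemma exists_pos_sub_add_sq_neg_of_clarkeDir_neg {e : EuclideanSpace ℝ (Fin n)}
    (h : clarkeDir V x e < 0) (hτ : 0 < τ) :
    ∃ β > 0, V (x + (τ * β) • e) - V x + τ * β ^ 2 < 0 := by
  obtain ⟨r, hr, hdecr⟩ := eventually_sub_le_mul_of_clarkeDir_neg h
  have hscale : Tendsto (fun β : ℝ => τ * β) (𝓝[>] 0) (𝓝[>] 0) :=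
    tendsto_nhdsWithin_iff.2 ⟨((continuous_const_mul τ).tendsto' 0 0 (mul_zero τ)).mono_left
      nhdsWithin_le_nhds, eventually_mem_nhdsWithin.mono fun β hβ => mul_pos hτ hβ⟩
  obtain ⟨β, ⟨hdecrβ, hβr⟩, hβ⟩ :=
    (((hscale.eventually hdecr).and (Ioo_mem_nhdsGT (neg_pos.2 hr))).and
      self_mem_nhdsWithin).exists
  refine ⟨β, hβ, ?_⟩
  nlinarith [mul_pos hτ hβ, hβr.2, hdecrβ]

end ItohAbe

theorem itohAbe_existence_general {n : ℕ} (V : EuclideanSpace ℝ (Fin n) → ℝ)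
    (hV : Continuous V) (hbdd : BddBelow (Set.range V))
    (x d : EuclideanSpace ℝ (Fin n)) (τ : ℝ) (hτ : 0 < τ) :
    (∃ β : ℝ, β ≠ 0 ∧ (V (x - (τ * β) • d) - V x) / (τ * β) = -β) ∨
      0 ≤ min (clarkeDir V x d) (clarkeDir V x (-d)) := by
  refine or_iff_not_imp_right.2 fun hstat => ?_
  rcases min_lt_iff.1 (not_le.1 hstat) with hneg | hneg
  · obtain ⟨β, hβ, hdesc⟩ := exists_pos_sub_add_sq_neg_of_clarkeDir_neg hneg hτ
    refine exists_itohAbe_root_of_neg hV hbdd d hτ (neg_ne_zero.2 hβ.ne') ?_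
    simpa only [mul_neg, neg_smul, sub_neg_eq_add, neg_sq] using hdesc
  · obtain ⟨β, hβ, hdesc⟩ := exists_pos_sub_add_sq_neg_of_clarkeDir_neg hneg hτ
    refine exists_itohAbe_root_of_neg hV hbdd d hτ hβ.ne' ?_
    simpa only [smul_neg, ← sub_eq_add_neg] using hdesc

/-- Existence of an Itoh–Abe step: either the discrete gradient equation has a
solution `β ≠ 0`, or `V` is Clarke directionally stationary at `x` along `d`. -/
theorem itohAbe_existence {n : ℕ} (V : EuclideanSpace ℝ (Fin n) → ℝ)
    (hV : Continuous V) (hbdd : BddBelow (Set.range V))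
    (x d : EuclideanSpace ℝ (Fin n)) (hd : ‖d‖ = 1) (τ : ℝ) (hτ : 0 < τ) :
    (∃ β : ℝ, β ≠ 0 ∧ (V (x - (τ * β) • d) - V x) / (τ * β) = -β) ∨
      0 ≤ min (clarkeDir V x d) (clarkeDir V x (-d)) :=
  itohAbe_existence_general V hV hbdd x d τ hτ
end

section
/- Suppose V : ℝⁿ → ℝ is locally Lipschitz, bounded below, and coercive, and (x^k) are iterates of the Itoh–Abe method with time steps τ_k ∈ [τ_min, τ_max] (0 < τ_min ≤ τ_max) and a cyclically dense deterministic sequence of directions (d^k) in the unit sphere. Then every accumulation point x* of (x^k) satisfies 0 ∈ ∂V(x*). -/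
/-!
Each Itoh–Abe step has the form `x' = x - s • d` with `V x' = V x - s ^ 2 / τ`, so `V` decreases
along the iterates and, being bounded below, forces the step lengths to tend to zero.
If the Clarke derivative at a cluster point `p` were negative in some unit direction `u`, then by
local Lipschitz continuity `V` would decrease at a uniform rate near `p` along every direction
close to `u`. An Itoh–Abe step from a point near `p` along such a direction has length bounded
below (the intermediate value theorem excludes the case of no step). Cyclic density supplies such
a direction within every `N` consecutive steps, and since the steps are small the iterates stay
near `p` over such a window: a contradiction.
-/

open scoped InnerProductSpace
open Metric Filter

open Set
open scoped Topology

section ItohAbe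

variable {E : Type*} [NormedAddCommGroup E] [NormedSpace ℝ E] {V : E → ℝ} {x x' d p : E}
  {τ : ℝ}

def ItohAbeStep (V : E → ℝ) (τ : ℝ) (d x x' : E) : Prop :=
  (∃ β : ℝ, β ≠ 0 ∧ β = -((V (x - (τ * β) • d) - V x) / (τ * β)) ∧ x' = x - (τ * β) • d) ∨
    ((¬ ∃ β : ℝ, β ≠ 0 ∧ β = -((V (x - (τ * β) • d) - V x) / (τ * β))) ∧ x' = x)

lemma itohAbe_eq_iff (hτ : τ ≠ 0) {β : ℝ} (hβ : β ≠ 0) :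
    β = -((V (x - (τ * β) • d) - V x) / (τ * β)) ↔
      V (x - (τ * β) • d) = V x - (τ * β) ^ 2 / τ := by
  rw [eq_neg_iff_add_eq_zero, eq_comm, ← sub_eq_zero (a := V _)]
  field_simp
  constructor <;> intro h <;> linarith

/- With the displacement `s = τ * β`, the discrete-gradient equation becomes the energy
identity `V (x - s • d) = V x - s ^ 2 / τ`. -/
lemma ItohAbeStep.exists_displacement (hτ : 0 < τ) (h : ItohAbeStep V τ d x x') :
    (∃ s ≠ 0, x' = x - s • d ∧ V x' = V x - s ^ 2 / τ) ∨
      ((¬ ∃ s ≠ 0, V (x - s • d) = V x - s ^ 2 / τ) ∧ x' = x) := by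
  rcases h with ⟨β, hβ, hroot, rfl⟩ | ⟨hno, rfl⟩
  · exact Or.inl ⟨τ * β, mul_ne_zero hτ.ne' hβ, rfl, (itohAbe_eq_iff hτ.ne' hβ).1 hroot⟩
  · refine Or.inr ⟨fun ⟨s, hs, hVs⟩ => hno ⟨s / τ, div_ne_zero hs hτ.ne', ?_⟩, rfl⟩
    rwa [itohAbe_eq_iff hτ.ne' (div_ne_zero hs hτ.ne'), mul_div_cancel₀ s hτ.ne']

lemma ItohAbeStep.exists_sub_smul (hτ : 0 < τ) (h : ItohAbeStep V τ d x x') :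
    ∃ s, x' = x - s • d ∧ V x' = V x - s ^ 2 / τ := by
  rcases h.exists_displacement hτ with ⟨s, -, hs⟩ | ⟨-, rfl⟩
  · exact ⟨s, hs⟩
  · exact ⟨0, by simp⟩

lemma ItohAbeStep.apply_le (hτ : 0 < τ) (h : ItohAbeStep V τ d x x') : V x' ≤ V x := by
  obtain ⟨s, -, hVs⟩ := h.exists_sub_smul hτ
  rw [hVs]
  linarith [div_nonneg (sq_nonneg s) hτ.le]

lemma ItohAbeStep.dist_sq (hτ : 0 < τ) (hd : ‖d‖ = 1) (h : ItohAbeStep V τ d x x') :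
    dist x' x ^ 2 = τ * (V x - V x') := by
  obtain ⟨s, rfl, hVs⟩ := h.exists_sub_smul hτ
  rw [hVs, dist_eq_norm, sub_sub_cancel_left, norm_neg, norm_smul, hd, mul_one,
    Real.norm_eq_abs, sq_abs]
  field_simp
  ring

lemma exists_ne_zero_apply_sub_smul_eq (hV : Continuous V) (hbdd : BddBelow (range V))
    (hτ : 0 < τ) {l : ℝ} (hl : V (x - l • d) < V x - l ^ 2 / τ) :
    ∃ s ≠ 0, V (x - s • d) = V x - s ^ 2 / τ := by
  obtain ⟨B, hB⟩ := hbdd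
  have hl0 : l ≠ 0 := by rintro rfl; simp at hl
  set g : ℝ → ℝ := fun t => V (x - (t * l) • d) - V x + (t * l) ^ 2 / τ
  have hg : Continuous g := by fun_prop
  have hg_top : Tendsto g atTop atTop := by
    refine tendsto_atTop_mono (fun t => ?_) (tendsto_atTop_add_const_left _ (B - V x)
      ((tendsto_pow_atTop two_ne_zero).const_mul_atTop (by positivity : 0 < l ^ 2 / τ)))
    have := hB (mem_range_self (x - (t * l) • d))
    simp only [g, mul_pow]
    linarith [show l ^ 2 / τ * t ^ 2 = t ^ 2 * l ^ 2 / τ by ring]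
  obtain ⟨t, ht, hgt⟩ := intermediate_value_Ici hg.continuousOn hg_top
    (show (0 : ℝ) ∈ Ici (g 1) by simp only [g, one_mul, mem_Ici]; linarith)
  refine ⟨t * l, mul_ne_zero (by linarith [mem_Ici.1 ht]) hl0, ?_⟩
  simp only [g] at hgt
  linarith

lemma ItohAbeStep.exists_ne_zero (hτ : 0 < τ) (hV : Continuous V) (hbdd : BddBelow (range V))
    (h : ItohAbeStep V τ d x x') {l : ℝ} (hl : V (x - l • d) < V x - l ^ 2 / τ) :
    ∃ s ≠ 0, x' = x - s • d ∧ V x' = V x - s ^ 2 / τ :=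
  (h.exists_displacement hτ).resolve_right fun ⟨hno, _⟩ =>
    hno (exists_ne_zero_apply_sub_smul_eq hV hbdd hτ hl)

def UniformDescent (V : E → ℝ) (p : E) (ρ c : ℝ) (w : E) : Prop :=
  ∀ y ∈ ball p ρ, ∀ l : ℝ, 0 < l → l < ρ → V (y + l • w) ≤ V y - c * l

namespace UniformDescent

variable {ρ c : ℝ} {u w : E}

lemma mono (h : UniformDescent V p ρ c w) {ρ' c' : ℝ} (hρ : ρ' ≤ ρ) (hc : c' ≤ c) :
    UniformDescent V p ρ' c' w := fun y hy l hl hlρ =>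
  (h y (ball_subset_ball hρ hy) l hl (hlρ.trans_le hρ)).trans (by nlinarith)

lemma smul (h : UniformDescent V p ρ c w) {a : ℝ} (ha : 0 < a) :
    UniformDescent V p (min ρ (ρ / a)) (c * a) (a • w) := by
  intro y hy l hl hlρ
  have hla : l * a < ρ := (lt_div_iff₀ ha).1 (hlρ.trans_le (min_le_right _ _))
  rw [smul_smul]
  exact (h y (ball_subset_ball (min_le_left _ _) hy) (l * a) (by positivity) hla).trans_eq
    (by ring)

lemma of_lipschitzOnWith (h : UniformDescent V p ρ c u) (hu : ‖u‖ ≤ 1) {L : NNReal}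
    (hV : LipschitzOnWith L V (ball p (3 * ρ))) {ε : ℝ} (hε : ε ≤ 1) (hw : ‖w - u‖ ≤ ε) :
    UniformDescent V p ρ (c - L * ε) w := by
  intro y hy l hl hlρ
  have hy' : ‖y - p‖ < ρ := mem_ball_iff_norm.1 hy
  have hw_norm : ‖w‖ ≤ 2 := by
    linarith [norm_le_norm_add_norm_sub' (E := E) w u]
  have hmem : ∀ z : E, ‖z‖ ≤ 2 → y + l • z ∈ ball p (3 * ρ) := fun z hz => by
    rw [mem_ball_iff_norm, add_sub_right_comm]
    calc ‖y - p + l • z‖ ≤ ‖y - p‖ + l * ‖z‖ := by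
          rw [← norm_smul_of_nonneg hl.le]; exact norm_add_le _ _
      _ < 3 * ρ := by nlinarith
  have hlip := hV.le_add_mul (hmem w hw_norm) (hmem u (hu.trans one_le_two))
  have hdist : dist (y + l • w) (y + l • u) ≤ l * ε := by
    rw [dist_add_left, dist_eq_norm, ← smul_sub, norm_smul, Real.norm_of_nonneg hl.le]
    exact mul_le_mul_of_nonneg_left hw hl.le
  have := h y hy l hl hlρ
  nlinarith [mul_le_mul_of_nonneg_left hdist L.coe_nonneg]

lemma exists_forall_norm_sub_lt (h : UniformDescent V p ρ c u) (hV : LocallyLipschitz V) (hu : ‖u‖ ≤ 1)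
    (hc : 0 < c) (hρ : 0 < ρ) :
    ∃ ρ' > 0, ∃ ε > 0, ∀ w, ‖w - u‖ < ε → UniformDescent V p ρ' (c / 2) w := by
  obtain ⟨L, t, ht, hL⟩ := hV p
  obtain ⟨R, hR, hRt⟩ := Metric.mem_nhds_iff.1 ht
  set ε := min 1 (c / (2 * (L + 1)))
  have hLε : L * ε ≤ c / 2 := by
    have : ε * (2 * (L + 1)) ≤ c := (le_div_iff₀ (by positivity)).1 (min_le_right _ _)
    nlinarith [L.coe_nonneg, (by positivity : 0 < ε)]
  refine ⟨min ρ (R / 3), by positivity, ε, by positivity, fun w hw => ?_⟩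
  have hball : ball p (3 * min ρ (R / 3)) ⊆ t :=
    (ball_subset_ball (by linarith [min_le_right ρ (R / 3)])).trans hRt
  exact ((h.mono (min_le_left _ _) le_rfl).of_lipschitzOnWith hu (hL.mono hball)
    (min_le_left _ _) hw.le).mono le_rfl (by linarith)

end UniformDescent

lemma ItohAbeStep.min_le_dist {ρ c : ℝ} (hτ : 0 < τ) (hV : Continuous V)
    (hbdd : BddBelow (range V)) (hd : ‖d‖ = 1) (hc : 0 < c) (hdesc : UniformDescent V p ρ c d)
    (hx : x ∈ ball p (ρ / 2)) (h : ItohAbeStep V τ d x x') : min (ρ / 2) (c * τ) ≤ dist x' x := by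
  have hρ : 0 < ρ / 2 := pos_of_mem_ball hx
  have hx' : x ∈ ball p ρ := ball_subset_ball (by linarith) hx
  set l₀ := min (ρ / 2) (c * τ)
  have hl₀ : 0 < l₀ := lt_min hρ (by positivity)
  have hl₀ρ : l₀ ≤ ρ / 2 := min_le_left _ _
  have hl₀c : l₀ ≤ c * τ := min_le_right _ _
  have hdescent : V (x - (-(l₀ / 2)) • d) < V x - (-(l₀ / 2)) ^ 2 / τ := by
    have := hdesc x hx' (l₀ / 2) (by positivity) (by linarith)
    rw [neg_smul, sub_neg_eq_add, neg_sq]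
    have : (l₀ / 2) ^ 2 / τ < c * (l₀ / 2) := by
      rw [div_lt_iff₀ hτ]; nlinarith
    linarith
  obtain ⟨s, hs, rfl, hVs⟩ := h.exists_ne_zero hτ hV hbdd hdescent
  rw [dist_eq_norm, sub_sub_cancel_left, norm_neg, norm_smul, hd, mul_one, Real.norm_eq_abs]
  by_contra! hsmall
  rcases hs.lt_or_gt with hneg | hpos
  · -- a forward step of length `-s` descends by at least `c * (-s)`, forcing `-s ≥ c * τ`
    have := hdesc x hx' (-s) (by linarith) (by linarith [abs_of_neg hneg])
    rw [neg_smul, ← sub_eq_add_neg, hVs] at this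
    have := (le_div_iff₀ hτ).1 (show c * -s ≤ s ^ 2 / τ by linarith)
    nlinarith [abs_of_neg hneg]
  · -- a backward step would be undone by a descent step from `x - s • d` back to `x`
    have hy : x - s • d ∈ ball p ρ := by
      rw [mem_ball_iff_norm, sub_right_comm]
      refine (norm_sub_le _ _).trans_lt ?_
      rw [norm_smul, hd, mul_one, Real.norm_eq_abs]
      linarith [mem_ball_iff_norm.1 hx, abs_of_pos hpos]
    have := hdesc _ hy s hpos (by linarith [abs_of_pos hpos])
    rw [sub_add_cancel, hVs] at this
    nlinarith [div_nonneg (sq_nonneg s) hτ.le]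

def CyclicallyDense (d : ℕ → E) : Prop :=
  ∀ ε > (0:ℝ), ∃ N : ℕ, ∀ k : ℕ, ∀ v : E, ‖v‖ = 1 → ∃ i < N, ‖v - d (k + i)‖ < ε

variable {xs ds : ℕ → E} {τs : ℕ → ℝ} {τmin τmax : ℝ}

lemma tendsto_dist_succ_of_itohAbeStep (hbdd : BddBelow (range V)) (hτmin : 0 < τmin)
    (hτ : ∀ k, τs k ∈ Icc τmin τmax) (hd : ∀ k, ‖ds k‖ = 1)
    (hstep : ∀ k, ItohAbeStep V (τs k) (ds k) (xs k) (xs (k + 1))) :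
    Tendsto (fun k => dist (xs (k + 1)) (xs k)) atTop (𝓝 0) := by
  have hτpos : ∀ k, 0 < τs k := fun k => hτmin.trans_le (hτ k).1
  have hdecr k : V (xs (k + 1)) ≤ V (xs k) := (hstep k).apply_le (hτpos k)
  have hlim := tendsto_atTop_ciInf (antitone_nat_of_succ_le hdecr)
    (hbdd.mono (range_comp_subset_range xs V))
  have hdiff : Tendsto (fun k => τmax * (V (xs k) - V (xs (k + 1)))) atTop (𝓝 0) := by
    simpa using (hlim.sub (hlim.comp (tendsto_add_atTop_nat 1))).const_mul τmax
  have hsqrt := (Real.continuous_sqrt.tendsto 0).comp hdiff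
  rw [Real.sqrt_zero] at hsqrt
  refine squeeze_zero (fun _ => dist_nonneg) (fun k => ?_) hsqrt
  rw [Function.comp_apply, Real.le_sqrt dist_nonneg
    (mul_nonneg ((hτpos 0).le.trans (hτ 0).2) (sub_nonneg.2 (hdecr k))),
    (hstep k).dist_sq (hτpos k) (hd k)]
  exact mul_le_mul_of_nonneg_right (hτ k).2 (sub_nonneg.2 (hdecr k))

lemma not_mapClusterPt_of_uniformDescent (hV : LocallyLipschitz V) (hbdd : BddBelow (range V))
    (hd : ∀ k, ‖ds k‖ = 1) (hcyc : CyclicallyDense ds) (hτmin : 0 < τmin)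
    (hτ : ∀ k, τmin ≤ τs k) (hstep : ∀ k, ItohAbeStep V (τs k) (ds k) (xs k) (xs (k + 1)))
    (hsteps : Tendsto (fun k => dist (xs (k + 1)) (xs k)) atTop (𝓝 0))
    {u : E} {ρ c : ℝ} (hu : ‖u‖ = 1) (hc : 0 < c) (hρ : 0 < ρ)
    (hdesc : UniformDescent V p ρ c u) : ¬ MapClusterPt p atTop xs := by
  intro hp
  obtain ⟨ρ', hρ', ε, hε, hnear⟩ := hdesc.exists_forall_norm_sub_lt hV hu.le hc hρ
  obtain ⟨N, hN⟩ := hcyc ε hε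
  set η := min (min (ρ' / 2) (c / 2 * τmin)) (ρ' / (4 * (N + 1)))
  have hη : 0 < η := by positivity
  obtain ⟨k, hk, hK⟩ : ∃ k, xs k ∈ ball p (ρ' / 4) ∧ ∀ j ≥ k, dist (xs (j + 1)) (xs j) < η :=
    ((mapClusterPt_iff_frequently.1 hp _ (ball_mem_nhds p (by positivity))).and_eventually
      (eventually_forall_ge_atTop.2 (hsteps.eventually_lt_const hη))).exists
  obtain ⟨i, hiN, hdi⟩ := hN k u hu
  have hwindow : dist (xs k) (xs (k + i)) ≤ ∑ _j ∈ Finset.Ico k (k + i), η :=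
    dist_le_Ico_sum_of_dist_le (Nat.le_add_right k i) fun hkj _ => by
      rw [dist_comm]; exact (hK _ hkj).le
  have hxi : xs (k + i) ∈ ball p (ρ' / 2) := by
    simp only [Finset.sum_const, Nat.card_Ico, add_tsub_cancel_left, nsmul_eq_mul] at hwindow
    have : (i : ℝ) * η ≤ ρ' / 4 := by
      calc (i : ℝ) * η ≤ (N + 1) * (ρ' / (4 * (N + 1))) := by
            gcongr
            · exact_mod_cast hiN.le.trans (Nat.le_succ N)
            · exact min_le_right _ _
        _ = ρ' / 4 := by field_simp
    rw [mem_ball] at hk ⊢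
    linarith [dist_triangle (xs (k + i)) (xs k) p, dist_comm (xs k) (xs (k + i))]
  have hlong := (hstep (k + i)).min_le_dist (hτmin.trans_le (hτ _)) hV.continuous hbdd (hd _)
    (half_pos hc) (hnear _ (by rwa [norm_sub_rev])) hxi
  have hshort := hK (k + i) (Nat.le_add_right k i)
  have : min (ρ' / 2) (c / 2 * τmin) ≤ min (ρ' / 2) (c / 2 * τs (k + i)) :=
    min_le_min le_rfl (by gcongr; exact hτ _)
  linarith [min_le_left (min (ρ' / 2) (c / 2 * τmin)) (ρ' / (4 * (N + 1)))]

end ItohAbe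

theorem deterministic_itohAbe_converges_to_stationary_general {n : ℕ}
    (V : EuclideanSpace ℝ (Fin n) → ℝ) (hV : LocallyLipschitz V)
    (hbdd : BddBelow (Set.range V))
    (d : ℕ → EuclideanSpace ℝ (Fin n)) (hd : ∀ k, ‖d k‖ = 1)
    (hcyc : ∀ ε > (0:ℝ), ∃ N : ℕ, ∀ k : ℕ, ∀ v : EuclideanSpace ℝ (Fin n),
      ‖v‖ = 1 → ∃ i < N, ‖v - d (k + i)‖ < ε)
    (τ : ℕ → ℝ) (τmin τmax : ℝ) (hτmin : 0 < τmin)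
    (hτ : ∀ k, τ k ∈ Set.Icc τmin τmax)
    (x : ℕ → EuclideanSpace ℝ (Fin n))
    (hupdate : ∀ k,
      (∃ β : ℝ, β ≠ 0 ∧
        β = -((V (x k - (τ k * β) • d k) - V (x k)) / (τ k * β)) ∧
        x (k+1) = x k - (τ k * β) • d k) ∨
      ((¬ ∃ β : ℝ, β ≠ 0 ∧
          β = -((V (x k - (τ k * β) • d k) - V (x k)) / (τ k * β))) ∧
        x (k+1) = x k)) :
    ∀ p : EuclideanSpace ℝ (Fin n), MapClusterPt p atTop x →
      (0 : EuclideanSpace ℝ (Fin n)) ∈ clarkeSubdiff V p := by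
  intro p hp v
  rw [inner_zero_right]
  refine Real.sInf_nonneg fun r ⟨δ, hδ, hr⟩ => ?_
  have hdesc : UniformDescent V p δ (-r) v := fun y hy l hl hlδ => by
    have := (div_le_iff₀ hl).1 (hr y hy l hl hlδ)
    linarith
  by_contra! hr0
  have hv : v ≠ 0 := by
    rintro rfl
    have := hdesc p (mem_ball_self hδ) (δ / 2) (half_pos hδ) (half_lt_self hδ)
    simp only [smul_zero, add_zero] at this
    nlinarith
  have hvpos : 0 < ‖v‖⁻¹ := inv_pos.2 (norm_pos_iff.2 hv)
  exact not_mapClusterPt_of_uniformDescent hV hbdd hd hcyc hτmin (fun k => (hτ k).1) hupdate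
    (tendsto_dist_succ_of_itohAbeStep hbdd hτmin hτ hd hupdate) (norm_smul_inv_norm hv)
    (mul_pos (neg_pos.2 hr0) hvpos) (lt_min hδ (div_pos hδ hvpos)) (hdesc.smul hvpos) hp

/-- Convergence of the deterministic Itoh–Abe method with cyclically dense
directions: every accumulation point of the iterates is Clarke stationary. -/
theorem deterministic_itohAbe_converges_to_stationary {n : ℕ}
    (V : EuclideanSpace ℝ (Fin n) → ℝ) (hV : LocallyLipschitz V)
    (hbdd : BddBelow (Set.range V))
    (hcoercive : ∀ M : ℝ, IsCompact {y : EuclideanSpace ℝ (Fin n) | V y ≤ M})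
    (d : ℕ → EuclideanSpace ℝ (Fin n)) (hd : ∀ k, ‖d k‖ = 1)
    (hcyc : ∀ ε > (0:ℝ), ∃ N : ℕ, ∀ k : ℕ, ∀ v : EuclideanSpace ℝ (Fin n),
      ‖v‖ = 1 → ∃ i < N, ‖v - d (k + i)‖ < ε)
    (τ : ℕ → ℝ) (τmin τmax : ℝ) (hτmin : 0 < τmin) (hτminmax : τmin ≤ τmax)
    (hτ : ∀ k, τ k ∈ Set.Icc τmin τmax)
    (x : ℕ → EuclideanSpace ℝ (Fin n))
    (hupdate : ∀ k,
      (∃ β : ℝ, β ≠ 0 ∧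
        β = -((V (x k - (τ k * β) • d k) - V (x k)) / (τ k * β)) ∧
        x (k+1) = x k - (τ k * β) • d k) ∨
      ((¬ ∃ β : ℝ, β ≠ 0 ∧
          β = -((V (x k - (τ k * β) • d k) - V (x k)) / (τ k * β))) ∧
        x (k+1) = x k)) :
    ∀ p : EuclideanSpace ℝ (Fin n), MapClusterPt p atTop x →
      (0 : EuclideanSpace ℝ (Fin n)) ∈ clarkeSubdiff V p :=
  deterministic_itohAbe_converges_to_stationary_general V hV hbdd d hd hcyc τ τmin τmax hτmin hτ x
    hupdate
end

section
/- Suppose under the hypotheses of the Itoh–Abe method there exist y, ε, δ > 0 and a unit vector d such that (V(z - λe) - V(z))/λ ≤ -ε for all z ∈ B_δ(y), unit e ∈ B_δ(d), and λ ∈ (0, δ). If the k-th iterate satisfies x^k ∈ B_δ(y) and d^k ∈ B_δ(d), then V(x^k) - V(x^{k+1}) ≥ min{ε² τ_min, δ²/τ_max}. -/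
open Metric

/-! An Itoh–Abe step of length `l` decreases `V` by exactly `l² / τ`. A short step (`l < δ`) stays
in the region of uniform descent, so the decrease is also at least `ε l`; comparing the two gives
`l ≥ ε τ` and hence a decrease of at least `ε² τ_min`. A long step (`l ≥ δ`) decreases `V` by at
least `δ² / τ_max` directly. -/

theorem itohAbe_decrease_eq {E : Type*} [NormedAddCommGroup E] [NormedSpace ℝ E]
    (V : E → ℝ) {x d x' : E} {τ l : ℝ} (hl : 0 ≤ l) (hd : ‖d‖ = 1) (hx' : x' = x - l • d)
    (hdiss : V x' - V x = -(1 / τ) * ‖x' - x‖ ^ 2) :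
    V x - V x' = l ^ 2 / τ := by
  have hstep : ‖x' - x‖ = l := by
    rw [hx', sub_sub_cancel_left, norm_neg, norm_smul, hd, mul_one, Real.norm_of_nonneg hl]
  rw [hstep] at hdiss
  linarith [div_eq_mul_one_div (l ^ 2) τ]

theorem sq_mul_le_of_mul_le_sq_div {ε l τ τmin : ℝ} (hε : 0 ≤ ε) (hl : 0 < l) (hτ : 0 < τ)
    (hτmin : τmin ≤ τ) (h : ε * l ≤ l ^ 2 / τ) :
    ε ^ 2 * τmin ≤ l ^ 2 / τ := by
  have hετ : ε * τ ≤ l := by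
    rw [le_div_iff₀ hτ, sq] at h
    nlinarith
  calc ε ^ 2 * τmin ≤ ε * (ε * τ) := by nlinarith
    _ ≤ ε * l := mul_le_mul_of_nonneg_left hετ hε
    _ ≤ l ^ 2 / τ := h

theorem itohAbe_step_uniform_decrease_general {n : ℕ}
    (V : EuclideanSpace ℝ (Fin n) → ℝ)
    (τmin τmax ε δ : ℝ) (hτmin : 0 < τmin)
    (hε : 0 < ε) (hδ : 0 < δ)
    (y dbar : EuclideanSpace ℝ (Fin n))
    (hdesc : ∀ z ∈ ball y δ, ∀ e : EuclideanSpace ℝ (Fin n), ‖e‖ = 1 →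
      e ∈ ball dbar δ → ∀ l : ℝ, 0 < l → l < δ → (V (z - l • e) - V z) / l ≤ -ε)
    (xk dk xk1 : EuclideanSpace ℝ (Fin n)) (τk l : ℝ)
    (hτk : τk ∈ Set.Icc τmin τmax) (hl : 0 < l)
    (hdk : ‖dk‖ = 1) (hxk : xk ∈ ball y δ) (hdkb : dk ∈ ball dbar δ)
    (hup : xk1 = xk - l • dk)
    (hdiss : V xk1 - V xk = -(1 / τk) * ‖xk1 - xk‖ ^ 2) :
    min (ε ^ 2 * τmin) (δ ^ 2 / τmax) ≤ V xk - V xk1 := by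
  have hτk0 : 0 < τk := hτmin.trans_le hτk.1
  have hdrop := itohAbe_decrease_eq V hl.le hdk hup hdiss
  rw [hdrop]
  rcases lt_or_ge l δ with hshort | hlong
  · have hεl : ε * l ≤ l ^ 2 / τk := by
      have hslope := hdesc xk hxk dk hdk hdkb l hl hshort
      rw [← hup, div_le_iff₀ hl] at hslope
      linarith
    exact (min_le_left _ _).trans (sq_mul_le_of_mul_le_sq_div hε.le hl hτk0 hτk.1 hεl)
  · exact (min_le_right _ _).trans
      (div_le_div₀ (sq_nonneg l) (pow_le_pow_left₀ hδ.le hlong 2) hτk0 hτk.2)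

/-- A uniform descent estimate for one Itoh–Abe step taken inside a ball with a
uniform descent direction. -/
theorem itohAbe_step_uniform_decrease {n : ℕ}
    (V : EuclideanSpace ℝ (Fin n) → ℝ)
    (τmin τmax ε δ : ℝ) (hτmin : 0 < τmin) (hτminmax : τmin ≤ τmax)
    (hε : 0 < ε) (hδ : 0 < δ)
    (y dbar : EuclideanSpace ℝ (Fin n))
    (hdesc : ∀ z ∈ ball y δ, ∀ e : EuclideanSpace ℝ (Fin n), ‖e‖ = 1 →
      e ∈ ball dbar δ → ∀ l : ℝ, 0 < l → l < δ → (V (z - l • e) - V z) / l ≤ -ε)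
    (xk dk xk1 : EuclideanSpace ℝ (Fin n)) (τk l : ℝ)
    (hτk : τk ∈ Set.Icc τmin τmax) (hl : 0 < l)
    (hdk : ‖dk‖ = 1) (hxk : xk ∈ ball y δ) (hdkb : dk ∈ ball dbar δ)
    (hup : xk1 = xk - l • dk)
    (hdiss : V xk1 - V xk = -(1 / τk) * ‖xk1 - xk‖ ^ 2) :
    min (ε ^ 2 * τmin) (δ ^ 2 / τmax) ≤ V xk - V xk1 :=
  itohAbe_step_uniform_decrease_general V τmin τmax ε δ hτmin hε hδ y dbar hdesc xk dk xk1 τk l hτk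
    hl hdk hxk hdkb hup hdiss
end

section
/- Let V : ℝⁿ → ℝ be continuously differentiable and R an orthogonal matrix mapping an orthonormal basis (f^i) to the standard basis (Rf^i = e^i). Then the rotated Itoh–Abe map ∇̄_R V(x,y) = Rᵀ ∇̂_R V(x,y), where (∇̂_R V(x,y))_i = [V(x + Σ_{j≤i} ⟨y-x, f^j⟩f^j) - V(x + Σ_{j<i} ⟨y-x, f^j⟩f^j)] / ⟨y-x, f^i⟩, satisfies the discrete gradient consistency property ⟨∇̄_R V(x,y), y - x⟩ = V(y) - V(x) for all x ≠ y with ⟨y-x, f^i⟩ ≠ 0 for all i. -/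
open scoped InnerProductSpace
open Finset

/-!
Write `y - x = ∑ⱼ cⱼ fʲ` with `cⱼ = ⟨y - x, fʲ⟩`. Since `Rᵀ eⁱ = fⁱ`, the pairing of `Rᵀ ∇̂_R V(x,y)`
with `y - x` is `∑ᵢ (∇̂_R V(x,y))ᵢ cᵢ`, and each summand is the increment of `V` between two
consecutive partial sums `x + ∑_{j<i} cⱼ fʲ` and `x + ∑_{j≤i} cⱼ fʲ`; the sum telescopes.
-/

theorem Fin.sum_sub_partialSums {n : ℕ} {M G : Type*} [AddCommMonoid M] [AddCommGroup G]
    (V : M → G) (x : M) (v : Fin n → M) :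
    ∑ i : Fin n, (V (x + ∑ j ∈ univ.filter (fun j => j ≤ i), v j) -
        V (x + ∑ j ∈ univ.filter (fun j => j < i), v j)) =
      V (x + ∑ j, v j) - V x := by
  set g : ℕ → G := fun k => V (x + ∑ j ∈ univ.filter (fun j : Fin n => (j : ℕ) < k), v j)
  have hsucc (i : Fin n) : univ.filter (fun j : Fin n => j ≤ i) =
      univ.filter (fun j : Fin n => (j : ℕ) < i + 1) :=
    filter_congr fun j _ => by rw [Fin.le_iff_val_le_val, Nat.lt_succ_iff]
  have hlt (i : Fin n) : univ.filter (fun j : Fin n => j < i) =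
      univ.filter (fun j : Fin n => (j : ℕ) < i) :=
    filter_congr fun j _ => Fin.lt_def
  calc ∑ i : Fin n, (V (x + ∑ j ∈ univ.filter (fun j => j ≤ i), v j) -
        V (x + ∑ j ∈ univ.filter (fun j => j < i), v j))
      = ∑ i : Fin n, (g (i + 1) - g i) := sum_congr rfl fun i _ => by simp only [g, hsucc, hlt]
    _ = ∑ k ∈ range n, (g (k + 1) - g k) := Fin.sum_univ_eq_sum_range (fun k => g (k + 1) - g k) n
    _ = g n - g 0 := sum_range_sub g n
    _ = V (x + ∑ j, v j) - V x := by simp [g]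

theorem LinearIsometryEquiv.inner_symm_sum_smul_single {ι E : Type*} [Fintype ι] [DecidableEq ι]
    [NormedAddCommGroup E] [InnerProductSpace ℝ E] {b : ι → E}
    {R : E ≃ₗᵢ[ℝ] EuclideanSpace ℝ ι} (hR : ∀ i, R (b i) = EuclideanSpace.single i (1 : ℝ))
    (a : ι → ℝ) (v : E) :
    ⟪R.symm (∑ i, a i • EuclideanSpace.single i (1 : ℝ)), v⟫_ℝ = ∑ i, a i * ⟪b i, v⟫_ℝ := by
  simp only [map_sum, map_smul, ← hR, symm_apply_apply, sum_inner, real_inner_smul_left]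

theorem rotatedItohAbe_consistency_general {n : ℕ}
    (V : EuclideanSpace ℝ (Fin n) → ℝ)
    (b : OrthonormalBasis (Fin n) ℝ (EuclideanSpace ℝ (Fin n)))
    (R : EuclideanSpace ℝ (Fin n) ≃ₗᵢ[ℝ] EuclideanSpace ℝ (Fin n))
    (hR : ∀ i, R (b i) = EuclideanSpace.single i (1:ℝ))
    (x y : EuclideanSpace ℝ (Fin n))
    (h : ∀ i, ⟪y - x, b i⟫_ℝ ≠ 0) :
    ⟪R.symm (∑ i : Fin n,
        ((V (x + ∑ j ∈ Finset.univ.filter (fun j => j ≤ i), ⟪y - x, b j⟫_ℝ • b j) -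
          V (x + ∑ j ∈ Finset.univ.filter (fun j => j < i), ⟪y - x, b j⟫_ℝ • b j)) /
            ⟪y - x, b i⟫_ℝ) • EuclideanSpace.single i (1:ℝ)),
      y - x⟫_ℝ = V y - V x := by
  have hexpand : ∑ j, ⟪y - x, b j⟫_ℝ • b j = y - x := by
    simpa only [real_inner_comm] using b.sum_repr' (y - x)
  conv_rhs => rw [← add_sub_cancel x y, ← hexpand, ← Fin.sum_sub_partialSums]
  rw [R.inner_symm_sum_smul_single hR]
  refine sum_congr rfl fun i _ => ?_
  rw [real_inner_comm (y - x), div_mul_cancel₀ _ (h i)]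

/-- The rotated Itoh–Abe discrete gradient satisfies the consistency property
`⟨∇̄_R V(x,y), y - x⟩ = V(y) - V(x)`. -/
theorem rotatedItohAbe_consistency {n : ℕ}
    (V : EuclideanSpace ℝ (Fin n) → ℝ) (hV : ContDiff ℝ 1 V)
    (b : OrthonormalBasis (Fin n) ℝ (EuclideanSpace ℝ (Fin n)))
    (R : EuclideanSpace ℝ (Fin n) ≃ₗᵢ[ℝ] EuclideanSpace ℝ (Fin n))
    (hR : ∀ i, R (b i) = EuclideanSpace.single i (1:ℝ))
    (x y : EuclideanSpace ℝ (Fin n)) (hxy : x ≠ y)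
    (h : ∀ i, ⟪y - x, b i⟫_ℝ ≠ 0) :
    ⟪R.symm (∑ i : Fin n,
        ((V (x + ∑ j ∈ Finset.univ.filter (fun j => j ≤ i), ⟪y - x, b j⟫_ℝ • b j) -
          V (x + ∑ j ∈ Finset.univ.filter (fun j => j < i), ⟪y - x, b j⟫_ℝ • b j)) /
            ⟪y - x, b i⟫_ℝ) • EuclideanSpace.single i (1:ℝ)),
      y - x⟫_ℝ = V y - V x :=
  rotatedItohAbe_consistency_general V b R hR x y h
end

section
/- Let V : ℝⁿ → ℝ be continuously differentiable and R an orthogonal matrix with Rf^i = e^i for an orthonormal basis (f^i). Then the rotated Itoh–Abe map ∇̄_R V(x,y) satisfies the mean value property: ∇̄_R V(x,y) → ∇V(x) as y → x (along y with ⟨y-x, f^i⟩ ≠ 0 for all i). -/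
open scoped InnerProductSpace Topology
open Filter Finset Asymptotics

/-!
The `i`-th coordinate of the rotated Itoh–Abe map is a difference quotient of `V` between two
points that differ by `⟪y - x, f^i⟫ • f^i` and both tend to `x`. Strict differentiability of a
`C¹` function at `x` makes such quotients tend to `DV(x) f^i`, and undoing the rotation
reassembles these coordinates into `∇V(x)`.
-/

theorem HasStrictFDerivAt.tendsto_sub_div {𝕜 E α : Type*} [NontriviallyNormedField 𝕜]
    [NormedAddCommGroup E] [NormedSpace 𝕜 E] {f : E → 𝕜} {f' : E →L[𝕜] 𝕜} {x : E}
    (hf : HasStrictFDerivAt f f' x) {l : Filter α} {a b : α → E} {c : α → 𝕜} {v : E}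
    (ha : Tendsto a l (𝓝 x)) (hb : Tendsto b l (𝓝 x)) (hab : ∀ t, a t - b t = c t • v)
    (hc : ∀ᶠ t in l, c t ≠ 0) :
    Tendsto (fun t => (f (a t) - f (b t)) / c t) l (𝓝 (f' v)) := by
  have hlo : (fun t => f (a t) - f (b t) - c t * f' v) =o[l] c := by
    have hab' : (fun t => a t - b t) =O[l] c :=
      isBigO_of_le' (c := ‖v‖) l fun t => by rw [hab, norm_smul, mul_comm]
    refine ((hf.isLittleO.comp_tendsto (ha.prodMk_nhds hb)).trans_isBigO hab').congr_left ?_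
    intro t
    simp only [Function.comp_apply, hab, map_smul, smul_eq_mul]
  have hlim := hlo.tendsto_div_nhds_zero.add_const (f' v)
  rw [zero_add] at hlim
  refine hlim.congr' ?_
  filter_upwards [hc] with t ht
  field_simp
  ring

theorem Finset.sum_filter_le_sub_sum_filter_lt {ι M : Type*} [LinearOrder ι] [Fintype ι]
    [AddCommGroup M] (g : ι → M) (i : ι) :
    ∑ j ∈ univ.filter (fun j => j ≤ i), g j - ∑ j ∈ univ.filter (fun j => j < i), g j = g i := by
  have hsplit : univ.filter (fun j => j ≤ i) = insert i (univ.filter (fun j => j < i)) := by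
    ext j
    simp [le_iff_lt_or_eq, or_comm]
  rw [hsplit, sum_insert (by simp), add_sub_cancel_right]

theorem tendsto_add_sum_inner_smul {ι E : Type*} [NormedAddCommGroup E]
    [InnerProductSpace ℝ E] (s : Finset ι) (v : ι → E) (x : E) :
    Tendsto (fun y => x + ∑ j ∈ s, ⟪y - x, v j⟫_ℝ • v j) (𝓝 x) (𝓝 x) := by
  have hcont : Continuous (fun y => x + ∑ j ∈ s, ⟪y - x, v j⟫_ℝ • v j) := by fun_prop
  simpa using hcont.tendsto x

theorem OrthonormalBasis.sum_fderiv_smul_eq_gradient {ι E : Type*} [Fintype ι]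
    [NormedAddCommGroup E] [InnerProductSpace ℝ E] [CompleteSpace E]
    (b : OrthonormalBasis ι ℝ E) (f : E → ℝ) (x : E) :
    ∑ i, fderiv ℝ f x (b i) • b i = gradient f x := by
  simpa using b.sum_repr' (gradient f x)

/-- The rotated Itoh–Abe discrete gradient satisfies the mean value property:
it converges to the gradient `∇V(x)` as `y → x` along admissible directions. -/
theorem rotatedItohAbe_mean_value {n : ℕ}
    (V : EuclideanSpace ℝ (Fin n) → ℝ) (hV : ContDiff ℝ 1 V)
    (b : OrthonormalBasis (Fin n) ℝ (EuclideanSpace ℝ (Fin n)))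
    (R : EuclideanSpace ℝ (Fin n) ≃ₗᵢ[ℝ] EuclideanSpace ℝ (Fin n))
    (hR : ∀ i, R (b i) = EuclideanSpace.single i (1:ℝ))
    (x : EuclideanSpace ℝ (Fin n)) :
    Tendsto (fun y : EuclideanSpace ℝ (Fin n) => R.symm (∑ i : Fin n,
        ((V (x + ∑ j ∈ Finset.univ.filter (fun j => j ≤ i), ⟪y - x, b j⟫_ℝ • b j) -
          V (x + ∑ j ∈ Finset.univ.filter (fun j => j < i), ⟪y - x, b j⟫_ℝ • b j)) /
            ⟪y - x, b i⟫_ℝ) • EuclideanSpace.single i (1:ℝ)))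
      (nhdsWithin x {y : EuclideanSpace ℝ (Fin n) | ∀ i, ⟪y - x, b i⟫_ℝ ≠ 0})
      (nhds (gradient V x)) := by
  have hRsymm : ∀ i, R.symm (EuclideanSpace.single i (1:ℝ)) = b i := fun i => by
    rw [← hR i, R.symm_apply_apply]
  simp only [map_sum, map_smul, hRsymm, ← b.sum_fderiv_smul_eq_gradient V x]
  refine tendsto_finsetSum _ fun i _ => Tendsto.smul_const ?_ _
  refine (hV.contDiffAt.hasStrictFDerivAt one_ne_zero).tendsto_sub_div
    ((tendsto_add_sum_inner_smul _ _ x).mono_left nhdsWithin_le_nhds)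
    ((tendsto_add_sum_inner_smul _ _ x).mono_left nhdsWithin_le_nhds)
    (fun y => ?_) (eventually_nhdsWithin_of_forall fun y hy => hy i)
  rw [add_sub_add_left_eq_sub, sum_filter_le_sub_sum_filter_lt]
end

section
/- Let V(x₁, x₂) = √(x₁² + x₂²) on ℝ², and set x^k = (1/k, 0), y^k = (0, 1/k). Then for every k, the Itoh–Abe discrete gradient satisfies ∇̄V(x^k, y^k) = (1, 1), while (1,1) ∉ ∂V(0,0) = closed unit ball; hence the Itoh–Abe discrete gradient at convergent argument pairs need not converge to a Clarke subgradient at the limit. -/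
open scoped InnerProductSpace
open Metric Filter MeasureTheory

/-- The point `(a, b)` of the Euclidean plane. -/
noncomputable def pt (a b : ℝ) : EuclideanSpace ℝ (Fin 2) :=
  (WithLp.equiv 2 (Fin 2 → ℝ)).symm ![a, b]

section ClarkeNorm

variable {n : ℕ}

/- The difference quotients of the norm are bounded by `‖v‖` (triangle inequality), and the
bound is attained along the ray through the origin. -/
theorem isLeast_clarkeDir_norm_zero (v : EuclideanSpace ℝ (Fin n)) :
    IsLeast {r : ℝ | ∃ δ > 0, ∀ y ∈ ball (0 : EuclideanSpace ℝ (Fin n)) δ, ∀ l : ℝ,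
      0 < l → l < δ → (‖y + l • v‖ - ‖y‖) / l ≤ r} ‖v‖ := by
  constructor
  · refine ⟨1, one_pos, fun y _ l hl _ => ?_⟩
    rw [div_le_iff₀ hl]
    calc ‖y + l • v‖ - ‖y‖ ≤ ‖l • v‖ := by linarith [norm_add_le y (l • v)]
      _ = ‖v‖ * l := by rw [norm_smul, Real.norm_of_nonneg hl.le, mul_comm]
  · rintro r ⟨δ, hδ, hr⟩
    have hl : (0 : ℝ) < δ / 2 := half_pos hδ
    have := hr 0 (mem_ball_self hδ) (δ / 2) hl (half_lt_self hδ)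
    rwa [zero_add, norm_zero, sub_zero, norm_smul, Real.norm_of_nonneg hl.le,
      mul_div_cancel_left₀ _ hl.ne'] at this

theorem clarkeDir_norm_zero (v : EuclideanSpace ℝ (Fin n)) :
    clarkeDir (fun p => ‖p‖) 0 v = ‖v‖ :=
  (isLeast_clarkeDir_norm_zero v).csInf_eq

theorem clarkeSubdiff_norm_zero :
    clarkeSubdiff (fun p : EuclideanSpace ℝ (Fin n) => ‖p‖) 0 = closedBall 0 1 := by
  ext p
  simp only [clarkeSubdiff, clarkeDir_norm_zero, Set.mem_ofPred_eq, mem_closedBall,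
    dist_zero_right]
  constructor
  · intro h
    have hp := h p
    rw [real_inner_self_eq_norm_sq] at hp
    nlinarith [norm_nonneg p]
  · intro hp v
    calc ⟪v, p⟫_ℝ ≤ ‖v‖ * ‖p‖ := real_inner_le_norm v p
      _ ≤ ‖v‖ := mul_le_of_le_one_right (norm_nonneg v) hp

end ClarkeNorm

@[simp] theorem pt_apply_zero (a b : ℝ) : pt a b 0 = a := rfl

@[simp] theorem pt_apply_one (a b : ℝ) : pt a b 1 = b := rfl

theorem norm_pt (a b : ℝ) : ‖pt a b‖ = Real.sqrt (a ^ 2 + b ^ 2) := by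
  simp [EuclideanSpace.norm_eq, Fin.sum_univ_two]

theorem norm_pt_zero_right (a : ℝ) : ‖pt a 0‖ = |a| := by
  rw [norm_pt, zero_pow two_ne_zero, add_zero, Real.sqrt_sq_eq_abs]

theorem norm_pt_zero_left (b : ℝ) : ‖pt 0 b‖ = |b| := by
  rw [norm_pt, zero_pow two_ne_zero, zero_add, Real.sqrt_sq_eq_abs]

theorem one_lt_norm_pt_one_one : 1 < ‖pt 1 1‖ := by
  rw [norm_pt, one_pow, Real.lt_sqrt zero_le_one]
  norm_num

/-- For `V(x₁,x₂) = √(x₁² + x₂²)`, with `x^k = (1/k, 0)` and `y^k = (0, 1/k)`,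
the Itoh–Abe discrete gradient equals `(1,1)` for every `k ≥ 1`, yet
`(1,1) ∉ ∂V(0,0)`, which is the closed unit ball: the Itoh–Abe discrete
gradient need not converge to a Clarke subgradient. -/
theorem itohAbe_discreteGradient_not_subgradient
    (V : EuclideanSpace ℝ (Fin 2) → ℝ)
    (hVdef : V = fun p => Real.sqrt (p 0 ^ 2 + p 1 ^ 2)) :
    (∀ k : ℕ, 0 < k →
      (V (pt 0 0) - V (pt (1 / k) 0)) / ((0 : ℝ) - 1 / k) = 1 ∧
      (V (pt 0 (1 / k)) - V (pt 0 0)) / ((1 / k : ℝ) - 0) = 1) ∧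
    clarkeSubdiff V 0 = Metric.closedBall (0 : EuclideanSpace ℝ (Fin 2)) 1 ∧
    pt 1 1 ∉ clarkeSubdiff V 0 := by
  have hV : V = fun p => ‖p‖ := by
    funext p
    simp [hVdef, EuclideanSpace.norm_eq, Fin.sum_univ_two]
  subst hV
  refine ⟨fun k hk => ?_, clarkeSubdiff_norm_zero, ?_⟩
  · have hk' : (0 : ℝ) < 1 / k := by positivity
    simp only [norm_pt_zero_right, norm_pt_zero_left, abs_zero, abs_of_pos hk']
    constructor <;> field_simp
  · rw [clarkeSubdiff_norm_zero, mem_closedBall, dist_zero_right, not_le]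
    exact one_lt_norm_pt_one_one
end
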